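/- For all real μ > 0 and B > 0, writing q = e₅ · exp(μQ) with e₅ = (0,0,0,0,0,1,0) and entries q₀,…,q₆, one has the identity (q₀ + q₆) + q₅·e^{−B} + (1/3)(1 − e^{−B})·(q₁ + q₃ + q₅) = (1/3)·(1 + (3/8)e^{−B}e^{−5μ} − ((1/2) − (1/4)e^{−B})e^{−3μ} + ((1/2) + (11/8)e^{−B})e^{−μ}). (This is the conditional probability that a transfer sequence induces the matching topology ab|c on a species tree of type (a*;b;c) or (b*;a;c), given that no A-joining transfer occurs before time t₂, where μ = (1/3)λt₂ and B = 3λ(t₃ − t₂).) -/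

import Mathlib

open Matrix

/-- The rate matrix `Q` of the 7-state continuous-time Markov chain. -/
noncomputable def Q : Matrix (Fin 7) (Fin 7) ℝ :=
  !![-3, 2, 0, 0, 0, 0, 1;
      1,-2, 1, 0, 0, 0, 0;
      0, 1,-3, 1, 1, 0, 0;
      0, 0, 1,-2, 1, 0, 0;
      0, 0, 1, 1,-3, 1, 0;
      0, 0, 0, 0, 1,-2, 1;
      1, 0, 0, 0, 0, 2,-3]

/-- `q μ = e₅ · exp(μQ)`, the state distribution at time `μ` started from state `5`. -/
noncomputable def q (μ : ℝ) : Fin 7 → ℝ :=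
  Matrix.vecMul (![0, 0, 0, 0, 0, 1, 0] : Fin 7 → ℝ) (NormedSpace.exp (μ • Q))

@[simp] lemma cons_val_five {α : Type*} {m : ℕ} (x : α) (u : Fin (m+5) → α) :
    Matrix.vecCons x u 5 = Matrix.vecHead (Matrix.vecTail (Matrix.vecTail (Matrix.vecTail (Matrix.vecTail u)))) :=
  rfl

@[simp] lemma cons_val_six {α : Type*} {m : ℕ} (x : α) (u : Fin (m+6) → α) :
    Matrix.vecCons x u 6 = Matrix.vecHead (Matrix.vecTail (Matrix.vecTail (Matrix.vecTail (Matrix.vecTail (Matrix.vecTail u))))) :=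
  rfl

attribute [local instance] Matrix.linftyOpNormedAddCommGroup Matrix.linftyOpNormedRing
attribute [local instance] Matrix.linftyOpNormedAlgebra

set_option maxHeartbeats 1000000 in
/-- Matrix exponential applied to an eigenvector. -/
lemma exp_mulVec_eigen (A : Matrix (Fin 7) (Fin 7) ℝ) (w : Fin 7 → ℝ) (c : ℝ)
    (h : A *ᵥ w = c • w) :
    NormedSpace.exp A *ᵥ w = Real.exp c • w := by
  have hpow : ∀ n : ℕ, A ^ n *ᵥ w = c ^ n • w := by
    intro n
    induction n with
    | zero => simp
    | succ n ih =>
      rw [pow_succ, ← Matrix.mulVec_mulVec, h, Matrix.mulVec_smul, ih, smul_smul,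
        pow_succ, mul_comm]
  let L : Matrix (Fin 7) (Fin 7) ℝ →ₗ[ℝ] (Fin 7 → ℝ) :=
    { toFun := fun M => M *ᵥ w
      map_add' := fun M N => Matrix.add_mulVec M N w
      map_smul' := fun r M => Matrix.smul_mulVec r M w }
  let L' := LinearMap.toContinuousLinearMap L
  have hL' : ∀ M, L' M = M *ᵥ w := fun M => rfl
  have hsum : Summable fun n : ℕ => ((n.factorial : ℝ))⁻¹ • A ^ n :=
    NormedSpace.expSeries_summable' (𝕂 := ℝ) A
  calc NormedSpace.exp A *ᵥ w = L' (∑' n : ℕ, ((n.factorial : ℝ))⁻¹ • A ^ n) := by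
        rw [hL', NormedSpace.exp_eq_tsum (𝕂 := ℝ)]
    _ = ∑' n : ℕ, L' (((n.factorial : ℝ))⁻¹ • A ^ n) := L'.map_tsum hsum
    _ = ∑' n : ℕ, (((n.factorial : ℝ))⁻¹ * c ^ n) • w := by
        refine tsum_congr fun n => ?_
        rw [hL', Matrix.smul_mulVec, hpow, smul_smul]
    _ = (∑' n : ℕ, ((n.factorial : ℝ))⁻¹ * c ^ n) • w := by
        refine Summable.tsum_smul_const ?_ w
        simpa using NormedSpace.expSeries_summable' (𝕂 := ℝ) c
    _ = Real.exp c • w := by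
        congr 1
        rw [Real.exp_eq_exp_ℝ, NormedSpace.exp_eq_tsum (𝕂 := ℝ)]
        simp [smul_eq_mul]

/-- Dot product of `q μ` with a right eigenvector of `Q`. -/
lemma q_dot_eigen (μ : ℝ) (w : Fin 7 → ℝ) (c : ℝ) (h : Q *ᵥ w = c • w) :
    q μ ⬝ᵥ w = Real.exp (μ * c) * w 5 := by
  have h' : (μ • Q) *ᵥ w = (μ * c) • w := by
    rw [Matrix.smul_mulVec, h, smul_smul]
  have := exp_mulVec_eigen (μ • Q) w (μ * c) h'
  unfold q
  rw [← dotProduct_mulVec, this]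
  simp [dotProduct, Fin.sum_univ_seven, cons_val_five, cons_val_six]

lemma eig0 : Q *ᵥ (![1,1,1,1,1,1,1] : Fin 7 → ℝ) = (0 : ℝ) • ![1,1,1,1,1,1,1] := by
  funext i; fin_cases i <;> simp [Q, Matrix.mulVec, dotProduct, Fin.sum_univ_seven, cons_val_five, cons_val_six] <;> norm_num

lemma eig1 : Q *ᵥ (![-2,-2,0,1,1,1,0] : Fin 7 → ℝ) = (-1 : ℝ) • ![-2,-2,0,1,1,1,0] := by
  funext i; fin_cases i <;> simp [Q, Matrix.mulVec, dotProduct, Fin.sum_univ_seven, cons_val_five, cons_val_six] <;> norm_num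

lemma eig1' : Q *ᵥ (![4,3,-1,-3,-2,0,2] : Fin 7 → ℝ) = (-1 : ℝ) • ![4,3,-1,-3,-2,0,2] := by
  funext i; fin_cases i <;> simp [Q, Matrix.mulVec, dotProduct, Fin.sum_univ_seven, cons_val_five, cons_val_six] <;> norm_num

lemma eig3 : Q *ᵥ (![2,-1,-1,2,-1,-1,2] : Fin 7 → ℝ) = (-3 : ℝ) • ![2,-1,-1,2,-1,-1,2] := by
  funext i; fin_cases i <;> simp [Q, Matrix.mulVec, dotProduct, Fin.sum_univ_seven, cons_val_five, cons_val_six] <;> norm_num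

lemma eig5 : Q *ᵥ (![-2,1,-1,0,1,-1,2] : Fin 7 → ℝ) = (-5 : ℝ) • ![-2,1,-1,0,1,-1,2] := by
  funext i; fin_cases i <;> simp [Q, Matrix.mulVec, dotProduct, Fin.sum_univ_seven, cons_val_five, cons_val_six] <;> norm_num

theorem match_prob_given_no_joining_a_star_bc (μ B : ℝ) (hμ : 0 < μ) (hB : 0 < B) :
    (q μ 0 + q μ 6) + q μ 5 * Real.exp (-B)
        + (1/3) * (1 - Real.exp (-B)) * (q μ 1 + q μ 3 + q μ 5) =
      (1/3) * (1 + (3/8) * Real.exp (-B) * Real.exp (-5 * μ)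
        - ((1/2) - (1/4) * Real.exp (-B)) * Real.exp (-3 * μ)
        + ((1/2) + (11/8) * Real.exp (-B)) * Real.exp (-μ)) := by
  have h0 := q_dot_eigen μ _ _ eig0
  have h1 := q_dot_eigen μ _ _ eig1
  have h1' := q_dot_eigen μ _ _ eig1'
  have h3 := q_dot_eigen μ _ _ eig3
  have h5 := q_dot_eigen μ _ _ eig5
  simp [dotProduct, Fin.sum_univ_seven] at h0 h1 h1' h3 h5
  rw [show -(μ * 3) = -3 * μ by ring] at h3
  rw [show -(μ * 5) = -5 * μ by ring] at h5
  linear_combination (1/3) * h0 + (1/6 + 11/24 * Real.exp (-B)) * h1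
    + (1/6 + 5/24 * Real.exp (-B)) * h1' + (1/6 - 1/12 * Real.exp (-B)) * h3
    + (-1/8 * Real.exp (-B)) * h5
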